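/- arXiv:2512.10690 — 2 statements merged into one kernel-verified Lean document; each statement's English description precedes it below -/
import Mathlib

section
/- Under the same hypotheses as the first Pohozaev identity, multiplying by ρ^d w' and integrating yields (d/(1+σ)) ∫₀^∞ ρ^{d-1} w^{2σ+2} dρ = d·ε ∫₀^∞ ρ^{d-1} w² dρ + (d-2) ∫₀^∞ ρ^{d-1} (w')² dρ. -/
open Real MeasureTheory Set

lemma poly_exp_bound (n : ℕ) {δ : ℝ} (hδ : 0 < δ) {x : ℝ} (hx : 0 ≤ x) :
    x ^ n * Real.exp (-(2*δ) * x) ≤ ((n.factorial : ℝ) / δ ^ n) * Real.exp (-δ * x) := by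
  have h1 : (δ * x) ^ n / n.factorial ≤ Real.exp (δ * x) :=
    Real.pow_div_factorial_le_exp _ (by positivity) n
  have h2 : x ^ n ≤ ((n.factorial : ℝ) / δ ^ n) * Real.exp (δ * x) := by
    rw [div_mul_eq_mul_div, le_div_iff₀ (by positivity)]
    calc x ^ n * δ ^ n = (δ * x) ^ n := by rw [mul_pow]; ring
      _ ≤ (n.factorial : ℝ) * Real.exp (δ * x) := by
          rw [div_le_iff₀ (by positivity)] at h1; linarith
  calc x ^ n * Real.exp (-(2*δ) * x)
      ≤ (((n.factorial : ℝ) / δ ^ n) * Real.exp (δ * x)) * Real.exp (-(2*δ) * x) := by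
        have := Real.exp_pos (-(2*δ)*x); nlinarith
    _ = ((n.factorial : ℝ) / δ ^ n) * Real.exp (-δ * x) := by
        rw [mul_assoc, ← Real.exp_add]; ring_nf

lemma integrableOn_of_exp_bound {f : ℝ → ℝ} {K b : ℝ} (hb : 0 < b)
    (hmeas : ContinuousOn f (Ioi 0))
    (hbound : ∀ x ∈ Ioi (0:ℝ), |f x| ≤ K * Real.exp (-b * x)) :
    IntegrableOn f (Ioi (0:ℝ)) := by
  have hint : IntegrableOn (fun x => K * Real.exp (-b*x)) (Ioi (0:ℝ)) :=
    (exp_neg_integrableOn_Ioi 0 hb).const_mul K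
  refine Integrable.mono' hint (hmeas.aestronglyMeasurable measurableSet_Ioi) ?_
  filter_upwards [ae_restrict_mem measurableSet_Ioi] with x hx
  simpa using hbound x hx

/-- Second Pohozaev identity: under the same hypotheses as the first one,
`(d/(1+σ)) ∫₀^∞ ρ^{d-1} w^{2σ+2} = dε ∫₀^∞ ρ^{d-1} w² + (d-2) ∫₀^∞ ρ^{d-1} (w')²`. -/
theorem pohozaev_second (d : ℕ) (hd : 3 ≤ d) (σ ε : ℝ) (hσ : 0 < σ)
    (w : ℝ → ℝ) (hw : ContDiff ℝ 2 w)
    (hpos : ∀ ρ : ℝ, 0 ≤ ρ → 0 < w ρ)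
    (hdecay : ∃ C > 0, ∃ δ > 0, ∀ ρ : ℝ, 0 ≤ ρ →
      |w ρ| ≤ C * Real.exp (-δ * ρ) ∧ |deriv w ρ| ≤ C * Real.exp (-δ * ρ))
    (hderiv0 : deriv w 0 = 0)
    (hode : ∀ ρ : ℝ, 0 < ρ →
      deriv (deriv w) ρ + (((d : ℝ) - 1) / ρ) * deriv w ρ + (w ρ) ^ (2 * σ + 1)
        = ε * w ρ) :
    ((d : ℝ) / (1 + σ)) * ∫ ρ in Set.Ioi (0 : ℝ), ρ ^ (d - 1) * (w ρ) ^ (2 * σ + 2)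
      = (d : ℝ) * ε * (∫ ρ in Set.Ioi (0 : ℝ), ρ ^ (d - 1) * (w ρ) ^ 2)
        + ((d : ℝ) - 2) * ∫ ρ in Set.Ioi (0 : ℝ), ρ ^ (d - 1) * (deriv w ρ) ^ 2 := by
  obtain ⟨C, hC, δ, hδ, hdec⟩ := hdecay
  have hσ1 : (0:ℝ) < 1 + σ := by linarith
  -- smoothness facts
  have hw1 : Differentiable ℝ w := hw.differentiable (by norm_num)
  have hw2 : Differentiable ℝ (deriv w) :=
    ((contDiff_succ_iff_deriv.mp (show ContDiff ℝ (1+1) w from by norm_num; exact hw)).2.2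
      ).differentiable (by norm_num)
  -- pointwise decay bounds
  have hbw : ∀ x : ℝ, 0 ≤ x → (w x)^2 ≤ C^2 * Real.exp (-(2*δ) * x) := by
    intro x hx
    have h := (hdec x hx).1
    calc (w x)^2 = |w x|^2 := (sq_abs _).symm
      _ ≤ (C * Real.exp (-δ*x))^2 := by
          apply pow_le_pow_left₀ (abs_nonneg _) h
      _ = C^2 * Real.exp (-(2*δ)*x) := by
          rw [mul_pow, sq (Real.exp _), ← Real.exp_add]; ring_nf
  have hbw' : ∀ x : ℝ, 0 ≤ x → (deriv w x)^2 ≤ C^2 * Real.exp (-(2*δ) * x) := by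
    intro x hx
    have h := (hdec x hx).2
    calc (deriv w x)^2 = |deriv w x|^2 := (sq_abs _).symm
      _ ≤ (C * Real.exp (-δ*x))^2 := by
          apply pow_le_pow_left₀ (abs_nonneg _) h
      _ = C^2 * Real.exp (-(2*δ)*x) := by
          rw [mul_pow, sq (Real.exp _), ← Real.exp_add]; ring_nf
  have hbwr : ∀ x : ℝ, 0 ≤ x →
      (w x) ^ (2*σ+2) ≤ C ^ (2*σ+2) * Real.exp (-(2*δ) * x) := by
    intro x hx
    have hwx : 0 < w x := hpos x hx
    have h : w x ≤ C * Real.exp (-δ*x) := (le_abs_self _).trans (hdec x hx).1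
    calc (w x) ^ (2*σ+2) ≤ (C * Real.exp (-δ*x)) ^ (2*σ+2) :=
          Real.rpow_le_rpow hwx.le h (by positivity)
      _ = C ^ (2*σ+2) * (Real.exp (-δ*x)) ^ (2*σ+2) :=
          Real.mul_rpow hC.le (Real.exp_pos _).le
      _ = C ^ (2*σ+2) * Real.exp ((-δ*x) * (2*σ+2)) := by rw [← Real.exp_mul]
      _ ≤ C ^ (2*σ+2) * Real.exp (-(2*δ) * x) := by
          have : (-δ*x) * (2*σ+2) ≤ -(2*δ)*x := by nlinarith [mul_nonneg (mul_nonneg hδ.le hx) hσ.le]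
          have hCp : (0:ℝ) ≤ C ^ (2*σ+2) := by positivity
          exact mul_le_mul_of_nonneg_left (Real.exp_le_exp.mpr this) hCp
  -- integrability of the three integrands
  have hcw : Continuous w := hw1.continuous
  have hcw' : Continuous (deriv w) := hw2.continuous
  have hint0 : IntegrableOn (fun ρ => ρ ^ (d-1) * (w ρ)^2) (Ioi (0:ℝ)) := by
    apply integrableOn_of_exp_bound (K := C^2 * ((d-1).factorial / δ^(d-1))) hδ
    · exact ((continuous_pow _).mul (hcw.pow 2)).continuousOn
    · intro x hx
      have hx0 : (0:ℝ) ≤ x := (le_of_lt hx)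
      rw [abs_of_nonneg (by positivity)]
      calc x ^ (d-1) * (w x)^2 ≤ x ^ (d-1) * (C^2 * Real.exp (-(2*δ)*x)) := by
            have := hbw x hx0; nlinarith [pow_nonneg hx0 (d-1)]
        _ = C^2 * (x^(d-1) * Real.exp (-(2*δ)*x)) := by ring
        _ ≤ C^2 * (((d-1).factorial / δ^(d-1)) * Real.exp (-δ*x)) := by
            have := poly_exp_bound (d-1) hδ hx0
            nlinarith [sq_nonneg C, pow_pos hδ (d-1)]
        _ = C^2 * ((d-1).factorial / δ^(d-1)) * Real.exp (-δ*x) := by ring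
  have hint2 : IntegrableOn (fun ρ => ρ ^ (d-1) * (deriv w ρ)^2) (Ioi (0:ℝ)) := by
    apply integrableOn_of_exp_bound (K := C^2 * ((d-1).factorial / δ^(d-1))) hδ
    · exact ((continuous_pow _).mul (hcw'.pow 2)).continuousOn
    · intro x hx
      have hx0 : (0:ℝ) ≤ x := (le_of_lt hx)
      rw [abs_of_nonneg (by positivity)]
      calc x ^ (d-1) * (deriv w x)^2 ≤ x ^ (d-1) * (C^2 * Real.exp (-(2*δ)*x)) := by
            have := hbw' x hx0; nlinarith [pow_nonneg hx0 (d-1)]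
        _ = C^2 * (x^(d-1) * Real.exp (-(2*δ)*x)) := by ring
        _ ≤ C^2 * (((d-1).factorial / δ^(d-1)) * Real.exp (-δ*x)) := by
            have := poly_exp_bound (d-1) hδ hx0
            nlinarith [sq_nonneg C, pow_pos hδ (d-1)]
        _ = C^2 * ((d-1).factorial / δ^(d-1)) * Real.exp (-δ*x) := by ring
  have hint1 : IntegrableOn (fun ρ => ρ ^ (d-1) * (w ρ) ^ (2*σ+2)) (Ioi (0:ℝ)) := by
    apply integrableOn_of_exp_bound (K := C^(2*σ+2) * ((d-1).factorial / δ^(d-1))) hδ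
    · intro x hx
      exact (((continuous_pow _).continuousAt.mul
        (hcw.continuousAt.rpow_const (Or.inl (hpos x (le_of_lt hx)).ne'))).continuousWithinAt)
    · intro x hx
      have hx0 : (0:ℝ) ≤ x := (le_of_lt hx)
      have hwx : 0 < w x := hpos x hx0
      rw [abs_of_nonneg (by positivity)]
      have hCp : (0:ℝ) < C ^ (2*σ+2) := by positivity
      calc x ^ (d-1) * (w x)^(2*σ+2) ≤ x ^ (d-1) * (C^(2*σ+2) * Real.exp (-(2*δ)*x)) := by
            have := hbwr x hx0; nlinarith [pow_nonneg hx0 (d-1)]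
        _ = C^(2*σ+2) * (x^(d-1) * Real.exp (-(2*δ)*x)) := by ring
        _ ≤ C^(2*σ+2) * (((d-1).factorial / δ^(d-1)) * Real.exp (-δ*x)) := by
            have := poly_exp_bound (d-1) hδ hx0
            nlinarith [pow_pos hδ (d-1)]
        _ = C^(2*σ+2) * ((d-1).factorial / δ^(d-1)) * Real.exp (-δ*x) := by ring
  -- the auxiliary function and its derivative
  set E : ℝ → ℝ := fun x => (deriv w x)^2 / 2 + (w x)^(2*σ+2) / (2*(1+σ)) - ε * (w x)^2 / 2
    with hE_def
  set g : ℝ → ℝ := fun x => x ^ d * E x with hg_def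
  set h : ℝ → ℝ := fun x =>
      (1 - (d:ℝ)/2) * (x ^ (d-1) * (deriv w x)^2)
      + ((d:ℝ)/(1+σ)/2) * (x ^ (d-1) * (w x)^(2*σ+2))
      - ((d:ℝ)*ε/2) * (x ^ (d-1) * (w x)^2) with hh_def
  have hpowd : ∀ x : ℝ, x ^ d = x ^ (d-1) * x := by
    intro x; rw [← pow_succ]; congr 1; omega
  have hderivg : ∀ x ∈ Ioi (0:ℝ), HasDerivAt g (h x) x := by
    intro x hx
    have hx0 : (0:ℝ) < x := hx
    have hwx : 0 < w x := hpos x hx0.le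
    have hdw : HasDerivAt w (deriv w x) x := (hw1 x).hasDerivAt
    have hddw : HasDerivAt (deriv w) (deriv (deriv w) x) x := (hw2 x).hasDerivAt
    have h1 : HasDerivAt (fun y => (deriv w y)^2 / 2) (deriv (deriv w) x * deriv w x) x := by
      have := (hddw.pow 2).div_const 2
      refine this.congr_deriv ?_
      simp [pow_one]; ring
    have h2 : HasDerivAt (fun y => (w y)^(2*σ+2) / (2*(1+σ)))
        (deriv w x * (w x)^(2*σ+1)) x := by
      have h2' := (hdw.rpow_const (p := 2*σ+2) (Or.inl hwx.ne')).div_const (2*(1+σ))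
      have he : 2*σ+2-1 = 2*σ+1 := by ring
      rw [he] at h2'
      refine h2'.congr_deriv ?_
      field_simp
      ring
    have h3 : HasDerivAt (fun y => ε * (w y)^2 / 2) (ε * (w x * deriv w x)) x := by
      have := ((hdw.pow 2).const_mul ε).div_const 2
      refine this.congr_deriv ?_
      simp [pow_one]; ring
    have hE : HasDerivAt E
        (deriv (deriv w) x * deriv w x + deriv w x * (w x)^(2*σ+1) - ε * (w x * deriv w x)) x :=
      (h1.add h2).sub h3
    have hg' := (hasDerivAt_pow d x).mul hE
    refine hg'.congr_deriv ?_
    have hode' : deriv (deriv w) x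
        = ε * w x - ((d:ℝ)-1)/x * deriv w x - (w x)^(2*σ+1) := by
      have := hode x hx0; linarith
    rw [hode', hh_def, hE_def, hpowd x]
    field_simp
    ring
  -- continuity at 0 and value at 0
  have hcont : ContinuousWithinAt g (Ici 0) 0 := by
    apply ContinuousAt.continuousWithinAt
    apply ContinuousAt.mul (continuous_pow d).continuousAt
    apply ContinuousAt.sub
    apply ContinuousAt.add
    · exact ((hcw'.pow 2).continuousAt).div_const 2
    · exact (hcw.continuousAt.rpow_const (Or.inl (hpos 0 le_rfl).ne')).div_const _
    · exact ((continuous_const.mul (hcw.pow 2)).continuousAt).div_const 2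
  have hg0 : g 0 = 0 := by
    simp only [hg_def]
    rw [zero_pow (by omega : d ≠ 0), zero_mul]
  -- tendsto 0 at infinity
  have hEbound : ∀ x : ℝ, 0 ≤ x →
      |E x| ≤ (C^2/2 + C^(2*σ+2)/(2*(1+σ)) + |ε| * C ^ 2 / 2) * Real.exp (-(2*δ)*x) := by
    intro x hx
    have b0 := hbw x hx
    have b1 := hbwr x hx
    have b2 := hbw' x hx
    have hrn : (0:ℝ) ≤ (w x)^(2*σ+2) := Real.rpow_nonneg (hpos x hx).le _
    have habs : |E x| ≤ (deriv w x)^2/2 + (w x)^(2*σ+2)/(2*(1+σ)) + |ε| * (w x)^2/2 := by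
      rw [hE_def]
      have h1 : |ε * (w x)^2 / 2| = |ε| * (w x)^2/2 := by
        rw [abs_div, abs_mul, abs_of_nonneg (sq_nonneg (w x))]
        norm_num
      calc |(deriv w x)^2 / 2 + (w x)^(2*σ+2) / (2*(1+σ)) - ε * (w x)^2 / 2|
          ≤ |(deriv w x)^2 / 2 + (w x)^(2*σ+2) / (2*(1+σ))| + |ε * (w x)^2 / 2| := abs_sub _ _
        _ ≤ (deriv w x)^2/2 + (w x)^(2*σ+2)/(2*(1+σ)) + |ε| * (w x)^2/2 := by
            rw [h1]
            have : |(deriv w x)^2 / 2 + (w x)^(2*σ+2) / (2*(1+σ))|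
                = (deriv w x)^2 / 2 + (w x)^(2*σ+2) / (2*(1+σ)) := by
              rw [abs_of_nonneg]; positivity
            linarith [le_of_eq this]
    refine habs.trans ?_
    have hεn : (0:ℝ) ≤ |ε| := abs_nonneg _
    have expand : (C^2/2 + C^(2*σ+2)/(2*(1+σ)) + |ε| * C ^ 2 / 2) * Real.exp (-(2*δ)*x)
        = C^2 * Real.exp (-(2*δ)*x) / 2 + C^(2*σ+2) * Real.exp (-(2*δ)*x) / (2*(1+σ))
          + |ε| * (C^2 * Real.exp (-(2*δ)*x)) / 2 := by ring
    rw [expand]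
    have e2 : (w x)^(2*σ+2)/(2*(1+σ)) ≤ C^(2*σ+2) * Real.exp (-(2*δ)*x) / (2*(1+σ)) := by
      gcongr
    have e3 : |ε| * (w x)^2/2 ≤ |ε| * (C^2 * Real.exp (-(2*δ)*x)) / 2 := by
      gcongr
    linarith
  have htend : Filter.Tendsto g Filter.atTop (nhds 0) := by
    set B : ℝ := C^2/2 + C^(2*σ+2)/(2*(1+σ)) + |ε| * C ^ 2 / 2 with hB
    have hB0 : 0 ≤ B := by positivity
    apply squeeze_zero_norm' (a := fun x => (B * ((d).factorial / δ^d)) * Real.exp (-δ*x))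
    · filter_upwards [Filter.eventually_ge_atTop (0:ℝ)] with x hx
      have h1 : |g x| ≤ x^d * (B * Real.exp (-(2*δ)*x)) := by
        rw [hg_def]
        simp only
        rw [abs_mul, abs_of_nonneg (pow_nonneg hx d)]
        exact mul_le_mul_of_nonneg_left (hEbound x hx) (pow_nonneg hx d)
      have h2 : x^d * Real.exp (-(2*δ)*x) ≤ ((d).factorial / δ^d) * Real.exp (-δ*x) :=
        poly_exp_bound d hδ hx
      calc ‖g x‖ = |g x| := rfl
        _ ≤ x^d * (B * Real.exp (-(2*δ)*x)) := h1
        _ = B * (x^d * Real.exp (-(2*δ)*x)) := by ring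
        _ ≤ B * (((d).factorial / δ^d) * Real.exp (-δ*x)) :=
            mul_le_mul_of_nonneg_left h2 hB0
        _ = (B * ((d).factorial / δ^d)) * Real.exp (-δ*x) := by ring
    · have hexp : Filter.Tendsto (fun x : ℝ => Real.exp (-δ*x)) Filter.atTop (nhds 0) := by
        have hδx : Filter.Tendsto (fun x : ℝ => δ * x) Filter.atTop Filter.atTop :=
          Filter.Tendsto.const_mul_atTop hδ Filter.tendsto_id
        have := Real.tendsto_exp_neg_atTop_nhds_zero.comp hδx
        simpa [Function.comp_def, neg_mul] using this
      simpa using hexp.const_mul (B * ((d).factorial / δ^d))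
  -- h is integrable
  have hinth : IntegrableOn h (Ioi (0:ℝ)) := by
    rw [hh_def]
    exact ((hint2.const_mul _).add (hint1.const_mul _)).sub (hint0.const_mul _)
  -- FTC
  have hFTC : ∫ x in Ioi (0:ℝ), h x = 0 - g 0 :=
    integral_Ioi_of_hasDerivAt_of_tendsto hcont hderivg hinth htend
  rw [hg0, sub_zero] at hFTC
  -- split the integral
  have hsplit : ∫ x in Ioi (0:ℝ), h x
      = (1 - (d:ℝ)/2) * (∫ x in Ioi (0:ℝ), x ^ (d-1) * (deriv w x)^2)
        + ((d:ℝ)/(1+σ)/2) * (∫ x in Ioi (0:ℝ), x ^ (d-1) * (w x)^(2*σ+2))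
        - ((d:ℝ)*ε/2) * (∫ x in Ioi (0:ℝ), x ^ (d-1) * (w x)^2) := by
    have hA : IntegrableOn (fun x => (1 - (d:ℝ)/2) * (x ^ (d-1) * (deriv w x)^2))
        (Ioi (0:ℝ)) := hint2.const_mul _
    have hB : IntegrableOn (fun x => ((d:ℝ)/(1+σ)/2) * (x ^ (d-1) * (w x)^(2*σ+2)))
        (Ioi (0:ℝ)) := hint1.const_mul _
    have hAB : IntegrableOn (fun x => (1 - (d:ℝ)/2) * (x ^ (d-1) * (deriv w x)^2)
        + ((d:ℝ)/(1+σ)/2) * (x ^ (d-1) * (w x)^(2*σ+2))) (Ioi (0:ℝ)) := hA.add hB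
    have hC0 : IntegrableOn (fun x => ((d:ℝ)*ε/2) * (x ^ (d-1) * (w x)^2))
        (Ioi (0:ℝ)) := hint0.const_mul _
    simp only [hh_def]
    rw [integral_sub hAB hC0, integral_add hA hB,
      integral_const_mul, integral_const_mul, integral_const_mul]
  rw [hsplit] at hFTC
  linear_combination (2:ℝ) * hFTC
end

section
/- For d ≥ 5, with w* the Aubin–Talenti soliton, the ratio ‖w*'‖²_{L²_r}/‖w*‖²_{L²_r} equals 2a(1-σ*)(1+σ*)/(σ*²(2+σ*)), where a = σ*²/(4(1+σ*)); consequently (σ*-σ)‖w*'‖²/(σ(1+σ*)‖w*‖²) evaluated at σ = σ* gives the derivative ε'(σ*) = (σ*-1)/(2σ*(1+σ*)(2+σ*)). -/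
open Real MeasureTheory Set Filter

lemma jcont {a m p : ℝ} (ha : 0 < a) (hm : 0 ≤ m) :
    Continuous (fun ρ : ℝ => ρ ^ m * (1 + a * ρ ^ 2) ^ (-p)) := by
  apply Continuous.mul
  · exact continuous_iff_continuousAt.2 fun x => continuousAt_rpow_const x m (Or.inr hm)
  · apply continuous_iff_continuousAt.2 fun x => ?_
    exact ContinuousAt.rpow_const (by fun_prop) (Or.inl (by positivity))

lemma jint {a m p : ℝ} (ha : 0 < a) (hm : 0 ≤ m) (hp : m - 2 * p < -1) :
    IntegrableOn (fun ρ : ℝ => ρ ^ m * (1 + a * ρ ^ 2) ^ (-p)) (Ioi 0) := by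
  have hp0 : 0 ≤ p := by nlinarith
  have hsplit : Ioc (0:ℝ) 1 ∪ Ioi 1 = Ioi 0 := Ioc_union_Ioi_eq_Ioi zero_le_one
  rw [← hsplit]
  apply IntegrableOn.union
  · exact ((jcont ha hm).integrableOn_Ioc)
  · have hint : IntegrableOn (fun ρ : ℝ => a ^ (-p) * ρ ^ (m - 2 * p)) (Ioi 1) :=
      (integrableOn_Ioi_rpow_of_lt hp one_pos).const_mul _
    apply hint.mono' ((jcont ha hm).aestronglyMeasurable.restrict)
    filter_upwards [ae_restrict_mem measurableSet_Ioi] with ρ hρ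
    have hρ0 : (0:ℝ) < ρ := lt_trans one_pos hρ
    have h1 : (0:ℝ) < 1 + a * ρ ^ 2 := by positivity
    have h2 : (0:ℝ) < a * ρ ^ 2 := by positivity
    have n1 : 0 ≤ ρ ^ m := Real.rpow_nonneg hρ0.le m
    rw [Real.norm_eq_abs, abs_of_nonneg (mul_nonneg n1 (Real.rpow_nonneg h1.le _))]
    have e1 : (1 + a * ρ ^ 2) ^ (-p) ≤ (a * ρ ^ 2) ^ (-p) :=
      Real.rpow_le_rpow_of_nonpos h2 (by linarith) (by linarith)
    have e2 : (a * ρ ^ 2) ^ (-p) = a ^ (-p) * ρ ^ (-(2*p)) := by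
      rw [Real.mul_rpow ha.le (by positivity), ← Real.rpow_natCast ρ 2,
        ← Real.rpow_mul hρ0.le]
      norm_num
    calc ρ ^ m * (1 + a * ρ ^ 2) ^ (-p) ≤ ρ ^ m * (a * ρ ^ 2) ^ (-p) :=
          mul_le_mul_of_nonneg_left e1 n1
      _ = a ^ (-p) * (ρ ^ m * ρ ^ (-(2*p))) := by rw [e2]; ring
      _ = a ^ (-p) * ρ ^ (m - 2 * p) := by
          rw [← Real.rpow_add hρ0, show m + -(2*p) = m - 2*p by ring]



lemma jpos {a m p : ℝ} (ha : 0 < a) (hm : 0 ≤ m) (hp : m - 2 * p < -1) :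
    0 < ∫ ρ in Ioi (0:ℝ), ρ ^ m * (1 + a * ρ ^ 2) ^ (-p) := by
  rw [setIntegral_pos_iff_support_of_nonneg_ae]
  · have hsub : Ioi (0:ℝ) ⊆ Function.support (fun ρ : ℝ => ρ ^ m * (1 + a * ρ ^ 2) ^ (-p)) := by
      intro ρ hρ
      have hρ0 : (0:ℝ) < ρ := hρ
      have h1 : (0:ℝ) < 1 + a * ρ ^ 2 := by positivity
      exact ne_of_gt (mul_pos (Real.rpow_pos_of_pos hρ0 m) (Real.rpow_pos_of_pos h1 _))
    rw [inter_eq_self_of_subset_right hsub]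
    simp [Real.volume_Ioi]
  · filter_upwards [ae_restrict_mem measurableSet_Ioi] with ρ hρ
    have hρ0 : (0:ℝ) < ρ := hρ
    have h1 : (0:ℝ) < 1 + a * ρ ^ 2 := by positivity
    positivity
  · exact jint ha hm hp

lemma jrec {a m p : ℝ} (ha : 0 < a) (hm : 2 ≤ m) (hp : m + 1 < 2 * p) :
    (m - 1) * ∫ ρ in Ioi (0:ℝ), ρ ^ (m - 2) * (1 + a * ρ ^ 2) ^ (-(p - 1))
      = 2 * a * (p - 1) * ∫ ρ in Ioi (0:ℝ), ρ ^ m * (1 + a * ρ ^ 2) ^ (-p) := by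
  have hm2 : (0:ℝ) ≤ m - 2 := by linarith
  have hint1 : IntegrableOn (fun ρ : ℝ => ρ ^ (m-2) * (1 + a * ρ ^ 2) ^ (-(p-1))) (Ioi 0) :=
    jint ha hm2 (by linarith)
  have hint2 : IntegrableOn (fun ρ : ℝ => ρ ^ m * (1 + a * ρ ^ 2) ^ (-p)) (Ioi 0) :=
    jint ha (by linarith) (by linarith)
  have hderiv : ∀ ρ ∈ Ioi (0:ℝ),
      HasDerivAt (fun ρ : ℝ => ρ ^ (m - 1) * (1 + a * ρ ^ 2) ^ (-(p - 1)))
        ((m - 1) * (ρ ^ (m - 2) * (1 + a * ρ ^ 2) ^ (-(p - 1)))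
          - 2 * a * (p - 1) * (ρ ^ m * (1 + a * ρ ^ 2) ^ (-p))) ρ := by
    intro ρ hρ
    have hρ0 : (0:ℝ) < ρ := hρ
    have h1 : (0:ℝ) < 1 + a * ρ ^ 2 := by positivity
    have d1 : HasDerivAt (fun ρ : ℝ => ρ ^ (m - 1)) ((m - 1) * ρ ^ (m - 2)) ρ := by
      have := Real.hasDerivAt_rpow_const (x := ρ) (p := m - 1) (Or.inl hρ0.ne')
      simpa [show m - 1 - 1 = m - 2 by ring] using this
    have dinner : HasDerivAt (fun ρ : ℝ => 1 + a * ρ ^ 2) (2 * a * ρ) ρ := by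
      have := ((hasDerivAt_pow 2 ρ).const_mul a).const_add 1
      refine this.congr_deriv ?_
      ring
    have d2 : HasDerivAt (fun ρ : ℝ => (1 + a * ρ ^ 2) ^ (-(p - 1)))
        (2 * a * ρ * (-(p - 1)) * (1 + a * ρ ^ 2) ^ (-(p - 1) - 1)) ρ :=
      dinner.rpow_const (Or.inl h1.ne')
    have hd := d1.mul d2
    refine hd.congr_deriv ?_
    have e1 : ρ ^ (m - 1) * ρ = ρ ^ m := by
      rw [show m = m - 1 + 1 by ring, Real.rpow_add_one hρ0.ne']
      norm_num
    have e2 : (-(p-1) - 1) = -p := by ring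
    rw [e2, ← e1]
    ring
  have hcont : ContinuousWithinAt
      (fun ρ : ℝ => ρ ^ (m - 1) * (1 + a * ρ ^ 2) ^ (-(p - 1))) (Ici (0:ℝ)) 0 := by
    apply ContinuousAt.continuousWithinAt
    apply ContinuousAt.mul
    · exact continuousAt_rpow_const 0 (m - 1) (Or.inr (by linarith))
    · exact ContinuousAt.rpow_const (by fun_prop) (Or.inl (by norm_num))
  have htop : Tendsto (fun ρ : ℝ => ρ ^ (m - 1) * (1 + a * ρ ^ 2) ^ (-(p - 1)))
      atTop (nhds 0) := by
    have hb : Tendsto (fun ρ : ℝ => a ^ (-(p-1)) * ρ ^ (m - 1 - 2 * (p - 1))) atTop (nhds 0) := by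
      have h0 : Tendsto (fun ρ : ℝ => ρ ^ (m - 1 - 2 * (p - 1))) atTop (nhds 0) := by
        have h := tendsto_rpow_neg_atTop (y := 2*(p-1) - (m-1)) (by linarith)
        simpa [show -(2*(p-1) - (m-1)) = m - 1 - 2*(p-1) by ring] using h
      rw [show (0:ℝ) = a ^ (-(p-1)) * 0 by ring]
      exact h0.const_mul _
    apply squeeze_zero' ?_ ?_ hb
    · filter_upwards [eventually_gt_atTop 0] with ρ hρ
      have h1 : (0:ℝ) < 1 + a * ρ ^ 2 := by positivity
      positivity
    · filter_upwards [eventually_gt_atTop 0] with ρ hρ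
      have h1 : (0:ℝ) < 1 + a * ρ ^ 2 := by positivity
      have h2 : (0:ℝ) < a * ρ ^ 2 := by positivity
      have e1 : (1 + a * ρ ^ 2) ^ (-(p-1)) ≤ (a * ρ ^ 2) ^ (-(p-1)) :=
        Real.rpow_le_rpow_of_nonpos h2 (by linarith) (by linarith)
      have e2 : (a * ρ ^ 2) ^ (-(p-1)) = a ^ (-(p-1)) * ρ ^ (-(2*(p-1))) := by
        rw [Real.mul_rpow ha.le (by positivity), ← Real.rpow_natCast ρ 2,
          ← Real.rpow_mul hρ.le]
        push_cast
        rw [show (2:ℝ) * -(p-1) = -(2*(p-1)) by ring]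
      calc ρ ^ (m-1) * (1 + a * ρ ^ 2) ^ (-(p-1)) ≤ ρ ^ (m-1) * (a * ρ ^ 2) ^ (-(p-1)) :=
            mul_le_mul_of_nonneg_left e1 (Real.rpow_nonneg hρ.le _)
        _ = a ^ (-(p-1)) * (ρ ^ (m-1) * ρ ^ (-(2*(p-1)))) := by rw [e2]; ring
        _ = a ^ (-(p-1)) * ρ ^ (m - 1 - 2 * (p - 1)) := by
            rw [← Real.rpow_add hρ, show m - 1 + -(2*(p-1)) = m - 1 - 2*(p-1) by ring]
  have hfint : IntegrableOn (fun ρ : ℝ =>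
      (m - 1) * (ρ ^ (m - 2) * (1 + a * ρ ^ 2) ^ (-(p - 1)))
        - 2 * a * (p - 1) * (ρ ^ m * (1 + a * ρ ^ 2) ^ (-p))) (Ioi 0) :=
    (hint1.const_mul _).sub (hint2.const_mul _)
  have key := integral_Ioi_of_hasDerivAt_of_tendsto hcont hderiv hfint htop
  have hF0 : (0:ℝ) ^ (m - 1) * (1 + a * (0:ℝ) ^ 2) ^ (-(p - 1)) = 0 := by
    rw [Real.zero_rpow (show m - 1 ≠ 0 by intro h; nlinarith)]
    ring
  rw [hF0, sub_zero] at key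
  rw [integral_sub (hint1.const_mul _) (hint2.const_mul _), integral_const_mul,
    integral_const_mul] at key
  linarith



-- J(m, p-1) = J(m, p) + a * J(m+2, p)
lemma jsplit {a m p : ℝ} (ha : 0 < a) (hm : 0 ≤ m) (hp : m - 2 * (p - 1) < -1) :
    ∫ ρ in Ioi (0:ℝ), ρ ^ m * (1 + a * ρ ^ 2) ^ (-(p - 1))
      = (∫ ρ in Ioi (0:ℝ), ρ ^ m * (1 + a * ρ ^ 2) ^ (-p))
        + a * ∫ ρ in Ioi (0:ℝ), ρ ^ (m + 2) * (1 + a * ρ ^ 2) ^ (-p) := by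
  have hint1 : IntegrableOn (fun ρ : ℝ => ρ ^ m * (1 + a * ρ ^ 2) ^ (-p)) (Ioi 0) :=
    jint ha hm (by linarith)
  have hint2 : IntegrableOn (fun ρ : ℝ => ρ ^ (m+2) * (1 + a * ρ ^ 2) ^ (-p)) (Ioi 0) :=
    jint ha (by linarith) (by linarith)
  have heq : ∀ ρ ∈ Ioi (0:ℝ), ρ ^ m * (1 + a * ρ ^ 2) ^ (-(p - 1))
      = ρ ^ m * (1 + a * ρ ^ 2) ^ (-p) + a * (ρ ^ (m+2) * (1 + a * ρ ^ 2) ^ (-p)) := by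
    intro ρ hρ
    have hρ0 : (0:ℝ) < ρ := hρ
    have h1 : (0:ℝ) < 1 + a * ρ ^ 2 := by positivity
    have e1 : (1 + a * ρ ^ 2) ^ (-(p-1)) = (1 + a * ρ ^ 2) ^ (-p) * (1 + a * ρ ^ 2) := by
      rw [show -(p-1) = -p + 1 by ring, Real.rpow_add_one h1.ne']
    have e2 : ρ ^ (m + 2) = ρ ^ m * ρ ^ 2 := by
      rw [show m + 2 = m + (2:ℕ) by norm_num, Real.rpow_add hρ0, Real.rpow_natCast]
    rw [e1, e2]
    ring
  rw [setIntegral_congr_fun measurableSet_Ioi heq,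
    integral_add hint1 (hint2.const_mul a), integral_const_mul]

/-- The Aubin–Talenti soliton profile `w*(ρ) = (1 + aρ²)^{-1/σ*}`. -/
noncomputable def wStar (d : ℕ) (ρ : ℝ) : ℝ :=
  (1 + (1 / ((d : ℝ) * ((d : ℝ) - 2))) * ρ ^ 2) ^ (-(1 / (2 / ((d : ℝ) - 2))))

/-- For `d ≥ 5`, `‖w*'‖²/‖w*‖² = 2a(1-σ*)(1+σ*)/(σ*²(2+σ*))` with `a = σ*²/(4(1+σ*))`,
and consequently `ε'(σ*) = -‖w*'‖²/(σ*(1+σ*)‖w*‖²) = (σ*-1)/(2σ*(1+σ*)(2+σ*))`. -/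
theorem wStar_ratio (d : ℕ) (hd : 5 ≤ d) :
    (∫ ρ in Set.Ioi (0 : ℝ), ρ ^ (d - 1) * (deriv (wStar d) ρ) ^ 2)
        / (∫ ρ in Set.Ioi (0 : ℝ), ρ ^ (d - 1) * (wStar d ρ) ^ 2)
      = 2 * ((2 / ((d : ℝ) - 2)) ^ 2 / (4 * (1 + 2 / ((d : ℝ) - 2))))
          * (1 - 2 / ((d : ℝ) - 2)) * (1 + 2 / ((d : ℝ) - 2))
          / ((2 / ((d : ℝ) - 2)) ^ 2 * (2 + 2 / ((d : ℝ) - 2)))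
    ∧ -((∫ ρ in Set.Ioi (0 : ℝ), ρ ^ (d - 1) * (deriv (wStar d) ρ) ^ 2)
        / ((2 / ((d : ℝ) - 2)) * (1 + 2 / ((d : ℝ) - 2))
            * ∫ ρ in Set.Ioi (0 : ℝ), ρ ^ (d - 1) * (wStar d ρ) ^ 2))
      = (2 / ((d : ℝ) - 2) - 1)
          / (2 * (2 / ((d : ℝ) - 2)) * (1 + 2 / ((d : ℝ) - 2))
              * (2 + 2 / ((d : ℝ) - 2))) := by
  have hc5 : (5:ℝ) ≤ (d:ℝ) := by exact_mod_cast hd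
  set c : ℝ := (d:ℝ) with hc_def
  have hc2 : (0:ℝ) < c - 2 := by linarith
  have hc0 : (0:ℝ) < c := by linarith
  set a : ℝ := 1 / (c * (c - 2)) with ha_def
  have ha : 0 < a := by rw [ha_def]; positivity
  have ha1 : a * (c * (c - 2)) = 1 := by
    rw [ha_def]; field_simp
  -- the profile as an rpow
  have hwd : wStar d = fun ρ : ℝ => (1 + a * ρ ^ 2) ^ (-((c - 2) / 2)) := by
    funext ρ
    rw [wStar, one_div_div]
  -- derivative
  have hder : ∀ ρ : ℝ, deriv (wStar d) ρ
      = 2 * a * ρ * (-((c - 2) / 2)) * (1 + a * ρ ^ 2) ^ (-((c - 2) / 2) - 1) := by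
    intro ρ
    have h1 : (0:ℝ) < 1 + a * ρ ^ 2 := by positivity
    have dinner : HasDerivAt (fun ρ : ℝ => 1 + a * ρ ^ 2) (2 * a * ρ) ρ := by
      have := ((hasDerivAt_pow 2 ρ).const_mul a).const_add 1
      refine this.congr_deriv ?_
      ring
    have hD : HasDerivAt (fun ρ : ℝ => (1 + a * ρ ^ 2) ^ (-((c - 2) / 2)))
        (2 * a * ρ * (-((c - 2) / 2)) * (1 + a * ρ ^ 2) ^ (-((c - 2) / 2) - 1)) ρ :=
      dinner.rpow_const (Or.inl h1.ne')
    rw [hwd]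
    exact hD.deriv
  -- pointwise identities on Ioi 0
  have hd1 : 1 ≤ d := by omega
  have hcast1 : ((d - 1 : ℕ) : ℝ) = c - 1 := by
    rw [Nat.cast_sub hd1, Nat.cast_one]
  have hnum : ∀ ρ ∈ Ioi (0:ℝ), ρ ^ (d - 1) * (deriv (wStar d) ρ) ^ 2
      = ((c - 2) ^ 2 * a ^ 2) * (ρ ^ (c + 1) * (1 + a * ρ ^ 2) ^ (-c)) := by
    intro ρ hρ
    have hρ0 : (0:ℝ) < ρ := hρ
    have h1 : (0:ℝ) < 1 + a * ρ ^ 2 := by positivity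
    rw [hder ρ]
    have e1 : ((1 + a * ρ ^ 2) ^ (-((c - 2) / 2) - 1)) ^ 2 = (1 + a * ρ ^ 2) ^ (-c) := by
      rw [← Real.rpow_natCast ((1 + a * ρ ^ 2) ^ (-((c - 2) / 2) - 1)) 2,
        ← Real.rpow_mul h1.le]
      push_cast
      rw [show (-((c - 2) / 2) - 1) * 2 = -c by ring]
    have e2 : (ρ ^ (d - 1) : ℝ) * ρ ^ 2 = ρ ^ (c + 1) := by
      rw [← pow_add, show d - 1 + 2 = d + 1 by omega, ← Real.rpow_natCast ρ (d + 1)]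
      push_cast
      ring_nf
      rfl
    calc ρ ^ (d - 1) * (2 * a * ρ * (-((c - 2) / 2))
          * (1 + a * ρ ^ 2) ^ (-((c - 2) / 2) - 1)) ^ 2
        = ((c - 2) ^ 2 * a ^ 2) * ((ρ ^ (d - 1) * ρ ^ 2)
            * ((1 + a * ρ ^ 2) ^ (-((c - 2) / 2) - 1)) ^ 2) := by ring
      _ = ((c - 2) ^ 2 * a ^ 2) * (ρ ^ (c + 1) * (1 + a * ρ ^ 2) ^ (-c)) := by
          rw [e1, e2]
  have hden : ∀ ρ ∈ Ioi (0:ℝ), ρ ^ (d - 1) * (wStar d ρ) ^ 2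
      = ρ ^ (c - 1) * (1 + a * ρ ^ 2) ^ (-(c - 2)) := by
    intro ρ hρ
    have hρ0 : (0:ℝ) < ρ := hρ
    have h1 : (0:ℝ) < 1 + a * ρ ^ 2 := by positivity
    rw [hwd]
    have e1 : ((1 + a * ρ ^ 2) ^ (-((c - 2) / 2))) ^ 2 = (1 + a * ρ ^ 2) ^ (-(c - 2)) := by
      rw [← Real.rpow_natCast ((1 + a * ρ ^ 2) ^ (-((c - 2) / 2))) 2,
        ← Real.rpow_mul h1.le]
      push_cast
      rw [show (-((c - 2) / 2)) * 2 = -(c - 2) by ring]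
    have e2 : (ρ ^ (d - 1) : ℝ) = ρ ^ (c - 1) := by
      rw [← Real.rpow_natCast ρ (d - 1), hcast1]
    rw [e1, e2]
  -- rewrite the integrals
  have hNum : (∫ ρ in Ioi (0:ℝ), ρ ^ (d - 1) * (deriv (wStar d) ρ) ^ 2)
      = ((c - 2) ^ 2 * a ^ 2) * ∫ ρ in Ioi (0:ℝ), ρ ^ (c + 1) * (1 + a * ρ ^ 2) ^ (-c) := by
    rw [setIntegral_congr_fun measurableSet_Ioi hnum, integral_const_mul]
  have hDen : (∫ ρ in Ioi (0:ℝ), ρ ^ (d - 1) * (wStar d ρ) ^ 2)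
      = ∫ ρ in Ioi (0:ℝ), ρ ^ (c - 1) * (1 + a * ρ ^ 2) ^ (-(c - 2)) := by
    rw [setIntegral_congr_fun measurableSet_Ioi hden]
  -- recurrences
  have r1 := jrec (a := a) (m := c + 1) (p := c) ha (by linarith) (by linarith)
  rw [show c + 1 - 2 = c - 1 by ring, show c + 1 - 1 = c by ring] at r1
  have r2 := jrec (a := a) (m := c + 1) (p := c - 1) ha (by linarith) (by linarith)
  rw [show c + 1 - 2 = c - 1 by ring, show c + 1 - 1 = c by ring,
    show c - 1 - 1 = c - 2 by ring] at r2
  have r3 := jsplit (a := a) (m := c - 1) (p := c - 1) ha (by linarith) (by linarith)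
  rw [show c - 1 - 1 = c - 2 by ring, show c - 1 + 2 = c + 1 by ring] at r3
  have hpos := jpos (a := a) (m := c - 1) (p := c - 2) ha (by linarith) (by linarith)
  set D0 := ∫ ρ in Ioi (0:ℝ), ρ ^ (c - 1) * (1 + a * ρ ^ 2) ^ (-(c - 2)) with hD0
  set D1 := ∫ ρ in Ioi (0:ℝ), ρ ^ (c - 1) * (1 + a * ρ ^ 2) ^ (-(c - 1)) with hD1
  set N0 := ∫ ρ in Ioi (0:ℝ), ρ ^ (c + 1) * (1 + a * ρ ^ 2) ^ (-c) with hN0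
  set N1 := ∫ ρ in Ioi (0:ℝ), ρ ^ (c + 1) * (1 + a * ρ ^ 2) ^ (-(c - 1)) with hN1
  -- key identity
  have key : 4 * (c - 1) * ((c - 2) ^ 2 * a ^ 2 * N0) = (c - 4) * D0 := by
    linear_combination (-(2 * a * (c - 2) ^ 2)) * r1 + (a * c * (c - 2)) * r2
      + (-(2 * a * c * (c - 2) ^ 2)) * r3 + ((c - 4) * D0) * ha1
  have hc1 : (0:ℝ) < c - 1 := by linarith
  have hkey : (c - 2) ^ 2 * a ^ 2 * N0 = (c - 4) / (4 * (c - 1)) * D0 := by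
    rw [div_mul_eq_mul_div, eq_div_iff (by positivity)]
    linarith [key]
  rw [hNum, hDen, hkey]
  have hD0ne : D0 ≠ 0 := ne_of_gt hpos
  constructor
  · rw [mul_div_assoc, div_self hD0ne, mul_one]
    field_simp
    ring
  · field_simp [hD0ne]
    ring
end
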